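/- arXiv:2409.16854 — 3 statements merged into one kernel-verified Lean document; each statement's English description precedes it below -/
import Mathlib

section
/- The iterated attack aggregation is permutation-invariant: for any real number v0 and any two lists L and L' of weight–score pairs such that L' is a permutation of L, F_att(v0, L) = F_att(v0, L'). -/
/-- Single-step attack aggregation in the QuAM framework. -/
def fAtt (v0 w v : ℝ) : ℝ := v0 - v0 * w * v

/-- Iterated attack aggregation: left fold of `fAtt` over a list of weight–score pairs. -/
def FAtt (v0 : ℝ) (L : List (ℝ × ℝ)) : ℝ :=
  L.foldl (fun acc p => fAtt acc p.1 p.2) v0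

/- Each attack scales the current score by `1 - w * v`, so the aggregate is `v0` times a product
of commuting factors, and a product over a commutative monoid ignores the order of its factors. -/

lemma fAtt_eq_mul (v0 w v : ℝ) : fAtt v0 w v = v0 * (1 - w * v) := by
  unfold fAtt
  ring

lemma FAtt_eq_mul_prod (v0 : ℝ) (L : List (ℝ × ℝ)) :
    FAtt v0 L = v0 * (L.map fun p => 1 - p.1 * p.2).prod := by
  induction L generalizing v0 with
  | nil => simp [FAtt]
  | cons p L ih =>
    rw [FAtt, List.foldl_cons, ← FAtt, ih, fAtt_eq_mul, List.map_cons, List.prod_cons, mul_assoc]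

theorem FAtt_perm_invariant (v0 : ℝ) (L L' : List (ℝ × ℝ)) (h : L.Perm L') :
    FAtt v0 L = FAtt v0 L' := by
  rw [FAtt_eq_mul_prod, FAtt_eq_mul_prod, (h.map _).prod_eq]
end

section
/- The iterated support aggregation is permutation-invariant: for any real number v0 and any two lists L and L' of weight–score pairs such that L' is a permutation of L, F_supp(v0, L) = F_supp(v0, L'). -/
/-!
Each step multiplies the "unsupported mass" `1 - v` by `1 - π v`, so the fold equals
`1 - (1 - v0) * ∏ (1 - πᵢ vᵢ)`, and a product in a commutative ring does not depend on the
order of its factors.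
-/

/-- Single-step support aggregation in the QuAM framework. -/
def fSupp (v0 w v : ℝ) : ℝ := v0 + (1 - v0) * w * v

/-- Iterated support aggregation: left fold of `fSupp` over a list of weight–score pairs. -/
def FSupp (v0 : ℝ) (L : List (ℝ × ℝ)) : ℝ :=
  L.foldl (fun acc p => fSupp acc p.1 p.2) v0

theorem one_sub_fSupp (v0 w v : ℝ) : 1 - fSupp v0 w v = (1 - v0) * (1 - w * v) := by
  unfold fSupp
  ring

theorem one_sub_FSupp (v0 : ℝ) (L : List (ℝ × ℝ)) :
    1 - FSupp v0 L = (1 - v0) * (L.map fun p => 1 - p.1 * p.2).prod := by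
  induction L generalizing v0 with
  | nil => simp [FSupp]
  | cons p L ih =>
    rw [List.map_cons, List.prod_cons, ← mul_assoc, ← one_sub_fSupp, ← ih]
    rfl

theorem FSupp_eq_one_sub_mul_prod (v0 : ℝ) (L : List (ℝ × ℝ)) :
    FSupp v0 L = 1 - (1 - v0) * (L.map fun p => 1 - p.1 * p.2).prod := by
  rw [← one_sub_FSupp, sub_sub_cancel]

theorem FSupp_perm_invariant (v0 : ℝ) (L L' : List (ℝ × ℝ)) (h : L.Perm L') :
    FSupp v0 L = FSupp v0 L' := by
  rw [FSupp_eq_one_sub_mul_prod, FSupp_eq_one_sub_mul_prod, (h.map _).prod_eq]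
end

section
/- Monotonicity of iterated support aggregation in the base score: fix a list L of weight–score pairs with all entries in [0,1]; then the map v0 ↦ F_supp(v0, L) is monotone nondecreasing on [0,1]. -/
theorem List.foldl_monotone_of_forall_mem {α β : Type*} [Preorder α] {f : α → β → α} {l : List β}
    (H : ∀ b ∈ l, Monotone fun a ↦ f a b) : Monotone fun a ↦ l.foldl f a := by
  induction l with
  | nil => exact monotone_id
  | cons b l ih => exact (ih fun c hc ↦ H c (mem_cons_of_mem b hc)).comp (H b mem_cons_self)

theorem fSupp_eq_affine (x w v : ℝ) : fSupp x w v = (1 - w * v) * x + w * v := by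
  unfold fSupp
  ring

theorem monotone_fSupp {w v : ℝ} (h : w * v ≤ 1) : Monotone fun x ↦ fSupp x w v := by
  intro a b hab
  have : 0 ≤ 1 - w * v := sub_nonneg.mpr h
  simp only [fSupp_eq_affine]
  gcongr

theorem monotone_FSupp {L : List (ℝ × ℝ)} (hL : ∀ p ∈ L, p.1 * p.2 ≤ 1) :
    Monotone fun v0 ↦ FSupp v0 L :=
  List.foldl_monotone_of_forall_mem fun p hp ↦ monotone_fSupp (hL p hp)

theorem FSupp_monotoneOn_base (L : List (ℝ × ℝ))
    (hL : ∀ p ∈ L, p.1 ∈ Set.Icc (0:ℝ) 1 ∧ p.2 ∈ Set.Icc (0:ℝ) 1) :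
    MonotoneOn (fun v0 => FSupp v0 L) (Set.Icc (0:ℝ) 1) := by
  refine (monotone_FSupp fun p hp ↦ ?_).monotoneOn _
  obtain ⟨⟨-, hw⟩, ⟨hv₀, hv⟩⟩ := hL p hp
  exact mul_le_one₀ hw hv₀ hv
end
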